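/- arXiv:1507.08441 — 5 statements merged into one kernel-verified Lean document; each statement's English description precedes it below -/
import Mathlib

section
/- Let V be a 3×3 symmetric positive semidefinite real matrix with entries c_{ij}, and let Q = (c_{ij})_{1≤i,j≤2}. If det(Q) = 0 and c_{11} > 0 and c_{22} > 0, then c_{00} - c_{01}²/c_{11} = c_{00} - c_{02}²/c_{22}, and this common value equals the generalized Schur complement q* = c_{00} - (c_{01}, c_{02}) Q⁻ (c_{10}, c_{20})ᵀ for any generalized inverse Q⁻ of Q. -/
/-!
Since `V` is positive semidefinite, every null vector `x` of `Q` extends by a zero coordinate to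
a null vector `(0, x)` of `V`, so `(c₀₁, c₀₂) ⬝ x = 0`. When `det Q = 0` the column
`(-c₁₂, c₁₁)` of `adj Q` is such a null vector, which gives `c₀₂ c₁₁ = c₀₁ c₁₂`. Hence
`(c₀₁, c₀₂) = Q w` with `w = (c₀₁ / c₁₁, 0)`, and for any generalized inverse
`wᵀ Q Q⁻ Q w = wᵀ Q w = c₀₁² / c₁₁`; together with `c₁₂² = c₁₁ c₂₂` this also identifies
`c₀₁² / c₁₁` with `c₀₂² / c₂₂`.
-/

open Matrix

theorem Matrix.mulVec_adjugate_col_eq_zero {n R : Type*} [Fintype n] [DecidableEq n] [CommRing R]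
    {A : Matrix n n R} (hA : A.det = 0) (j : n) : A *ᵥ (fun i => A.adjugate i j) = 0 := by
  ext i
  simpa [hA, mul_apply, mulVec, dotProduct] using congrFun (congrFun A.mul_adjugate i) j

theorem Matrix.mulVec_cons_zero {m R : Type*} [Fintype m] [NonUnitalNonAssocSemiring R] {n : ℕ}
    (V : Matrix m (Fin (n + 1)) R) (x : Fin n → R) :
    V *ᵥ Fin.cons 0 x = V.submatrix id Fin.succ *ᵥ x := by
  ext i
  simp [mulVec, dotProduct, Fin.sum_univ_succ]

theorem Matrix.dotProduct_mulVec_eq_of_mul_mul_eq {m n R : Type*} [Fintype m] [Fintype n]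
    [Semiring R] {Q : Matrix m n R} {G : Matrix n m R} (hG : Q * G * Q = Q)
    (u : m → R) (v : n → R) : u ᵥ* Q ⬝ᵥ G *ᵥ (Q *ᵥ v) = u ⬝ᵥ Q *ᵥ v := by
  rw [← dotProduct_mulVec, mulVec_mulVec, mulVec_mulVec, hG]

section PosSemidef

open scoped ComplexOrder

variable {𝕜 : Type*} [RCLike 𝕜]

theorem Matrix.PosSemidef.row_dotProduct_eq_zero_of_mulVec_eq_zero {n : ℕ}
    {V : Matrix (Fin (n + 1)) (Fin (n + 1)) 𝕜} (hV : V.PosSemidef) {x : Fin n → 𝕜}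
    (hx : V.submatrix Fin.succ Fin.succ *ᵥ x = 0) : (fun i => V 0 i.succ) ⬝ᵥ x = 0 := by
  have hquad : star (Fin.cons 0 x : Fin (n + 1) → 𝕜) ⬝ᵥ V *ᵥ Fin.cons 0 x = 0 := by
    rw [mulVec_cons_zero, dotProduct, Fin.sum_univ_succ]
    simpa [dotProduct, mulVec] using congrArg (star x ⬝ᵥ ·) hx
  have hker := (hV.dotProduct_mulVec_zero_iff _).mp hquad
  rw [mulVec_cons_zero] at hker
  exact congrFun hker 0

theorem Matrix.PosSemidef.mul_eq_mul_of_det_submatrix_succ_eq_zero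
    {V : Matrix (Fin 3) (Fin 3) 𝕜} (hV : V.PosSemidef)
    (hdet : (V.submatrix Fin.succ Fin.succ).det = 0) : V 0 2 * V 1 1 = V 0 1 * V 1 2 := by
  have h := hV.row_dotProduct_eq_zero_of_mulVec_eq_zero (mulVec_adjugate_col_eq_zero hdet 1)
  simp only [dotProduct, Fin.isValue, adjugate_fin_two, submatrix_apply, Fin.succ_one_eq_two,
    Fin.succ_zero_eq_one, of_apply, cons_val', cons_val_one, cons_val_fin_one, Fin.sum_univ_two,
    cons_val_zero, mul_neg] at h
  linear_combination h

end PosSemidef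

/-- when `det Q = 0`, `c₁₁ > 0`, `c₂₂ > 0`, the two one-variable Schur
complements agree and equal the generalized Schur complement for any g-inverse of `Q`. -/
theorem schur_complement_degenerate_case
    (V : Matrix (Fin 3) (Fin 3) ℝ) (hV : V.PosSemidef)
    (hdet : (V.submatrix Fin.succ Fin.succ).det = 0)
    (h11 : 0 < V 1 1) (h22 : 0 < V 2 2) :
    V 0 0 - (V 0 1) ^ 2 / V 1 1 = V 0 0 - (V 0 2) ^ 2 / V 2 2 ∧
    ∀ Qg : Matrix (Fin 2) (Fin 2) ℝ,
      (V.submatrix Fin.succ Fin.succ) * Qg * (V.submatrix Fin.succ Fin.succ)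
          = V.submatrix Fin.succ Fin.succ →
      V 0 0 - (fun i : Fin 2 => V 0 i.succ) ⬝ᵥ Qg.mulVec (fun i : Fin 2 => V i.succ 0)
        = V 0 0 - (V 0 1) ^ 2 / V 1 1 := by
  set Q := V.submatrix Fin.succ Fin.succ
  have hsym (i j : Fin 3) : V j i = V i j := by simpa using hV.isHermitian.apply i j
  have h02 : V 0 2 = V 0 1 * V 1 2 / V 1 1 := by
    rw [eq_div_iff h11.ne', hV.mul_eq_mul_of_det_submatrix_succ_eq_zero hdet]
  have hsq : V 1 2 ^ 2 = V 1 1 * V 2 2 := by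
    rw [det_fin_two] at hdet
    simp only [Q, Fin.isValue, submatrix_apply, Fin.succ_zero_eq_one, Fin.succ_one_eq_two,
      hsym 1 2] at hdet
    linear_combination -hdet
  refine ⟨?_, fun Qg hQg => ?_⟩
  · rw [h02, div_pow, mul_pow, hsq]
    field_simp
  · set w : Fin 2 → ℝ := ![V 0 1 / V 1 1, 0]
    have hcol : (fun i : Fin 2 => V i.succ 0) = Q *ᵥ w := by
      ext i; fin_cases i <;> simp [Q, w, mulVec, dotProduct, hsym 0 1, hsym 0 2, hsym 1 2, h02]
        <;> field_simp
    have hrow : (fun i : Fin 2 => V 0 i.succ) = w ᵥ* Q := by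
      ext i; fin_cases i <;> simp [Q, w, vecMul, dotProduct, h02] <;> field_simp
    rw [hcol, hrow, dotProduct_mulVec_eq_of_mul_mul_eq hQg]
    simp only [Q, w, dotProduct, mulVec, submatrix_apply, Fin.sum_univ_two, Fin.succ_zero_eq_one,
      Fin.succ_one_eq_two, cons_val_zero, cons_val_one, cons_val_fin_one, mul_zero, add_zero,
      zero_mul, sub_right_inj]
    field_simp
end

section
/- Let B = Σ⁻¹ - Σ⁻¹ 1_k 1_k' Σ⁻¹ / (1_k' Σ⁻¹ 1_k), where Σ is a k×k symmetric positive definite real matrix. Then B is positive semidefinite, and B x = 0 if and only if x is a scalar multiple of 1_k. -/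
open Matrix

namespace Matrix

variable {n : Type*} [Fintype n]

noncomputable def deflation (A : Matrix n n ℝ) (e : n → ℝ) : Matrix n n ℝ :=
  A - (e ⬝ᵥ A *ᵥ e)⁻¹ • vecMulVec (A *ᵥ e) (A *ᵥ e)

theorem IsHermitian.dotProduct_mulVec_comm {A : Matrix n n ℝ} (hA : A.IsHermitian)
    (x y : n → ℝ) : x ⬝ᵥ A *ᵥ y = A *ᵥ x ⬝ᵥ y := by
  rw [dotProduct_mulVec, ← mulVec_transpose, ← conjTranspose_eq_transpose_of_trivial, hA.eq]

theorem deflation_mulVec (A : Matrix n n ℝ) (e x : n → ℝ) :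
    deflation A e *ᵥ x = A *ᵥ x - ((e ⬝ᵥ A *ᵥ e)⁻¹ * (A *ᵥ e ⬝ᵥ x)) • A *ᵥ e := by
  rw [deflation, sub_mulVec, smul_mulVec, vecMulVec_mulVec, op_smul_eq_smul, smul_smul]

theorem isHermitian_deflation {A : Matrix n n ℝ} (hA : A.IsHermitian) (e : n → ℝ) :
    (deflation A e).IsHermitian := by
  have hrank : (vecMulVec (A *ᵥ e) (A *ᵥ e)).IsHermitian := by
    simpa only [star_trivial] using (posSemidef_vecMulVec_self_star (A *ᵥ e)).1
  exact hA.sub (hrank.smul (star_trivial _))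

/-- The quadratic form of `deflation A e` at `x` is that of `A` at `x - t • e`, where `t • e` is
the `A`-orthogonal projection of `x` onto the line through `e`. -/
theorem IsHermitian.exists_dotProduct_deflation_mulVec_eq {A : Matrix n n ℝ} (hA : A.IsHermitian)
    (e x : n → ℝ) : ∃ t : ℝ, x ⬝ᵥ deflation A e *ᵥ x = (x - t • e) ⬝ᵥ A *ᵥ (x - t • e) := by
  refine ⟨(e ⬝ᵥ A *ᵥ e)⁻¹ * (A *ᵥ e ⬝ᵥ x), ?_⟩
  have hex : e ⬝ᵥ A *ᵥ x = A *ᵥ e ⬝ᵥ x := hA.dotProduct_mulVec_comm e x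
  have hxe : x ⬝ᵥ A *ᵥ e = A *ᵥ e ⬝ᵥ x := dotProduct_comm _ _
  have hc := inv_mul_mul_self (e ⬝ᵥ A *ᵥ e)⁻¹
  rw [inv_inv] at hc
  simp only [deflation_mulVec, mulVec_sub, mulVec_smul, dotProduct_sub, sub_dotProduct,
    dotProduct_smul, smul_dotProduct, smul_eq_mul, hex, hxe]
  linear_combination -(A *ᵥ e ⬝ᵥ x) ^ 2 * hc

theorem PosSemidef.deflation {A : Matrix n n ℝ} (hA : A.PosSemidef) (e : n → ℝ) :
    (deflation A e).PosSemidef := by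
  refine .of_dotProduct_mulVec_nonneg (isHermitian_deflation hA.isHermitian e) fun x => ?_
  obtain ⟨t, ht⟩ := hA.isHermitian.exists_dotProduct_deflation_mulVec_eq e x
  simpa only [star_trivial, ht] using hA.dotProduct_mulVec_nonneg (x - t • e)

theorem PosDef.deflation_mulVec_self {A : Matrix n n ℝ} (hA : A.PosDef) (e : n → ℝ) :
    deflation A e *ᵥ e = 0 := by
  rcases eq_or_ne e 0 with rfl | he
  · exact mulVec_zero _
  have hc : e ⬝ᵥ A *ᵥ e ≠ 0 := by
    simpa only [star_trivial] using (hA.dotProduct_mulVec_pos he).ne'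
  rw [deflation_mulVec, dotProduct_comm (A *ᵥ e), inv_mul_cancel₀ hc, one_smul, sub_self]

theorem PosDef.deflation_mulVec_eq_zero_iff {A : Matrix n n ℝ} (hA : A.PosDef) (e x : n → ℝ) :
    deflation A e *ᵥ x = 0 ↔ ∃ c : ℝ, x = c • e := by
  constructor
  · intro hx
    obtain ⟨t, ht⟩ := hA.isHermitian.exists_dotProduct_deflation_mulVec_eq e x
    rw [hx, dotProduct_zero] at ht
    refine ⟨t, sub_eq_zero.mp (not_not.mp fun hne => ?_)⟩
    simpa only [star_trivial, ← ht, lt_self_iff_false] using hA.dotProduct_mulVec_pos hne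
  · rintro ⟨c, rfl⟩
    rw [mulVec_smul, hA.deflation_mulVec_self, smul_zero]

end Matrix

theorem centered_inverse_psd_and_kernel_general
    (k : ℕ) (S : Matrix (Fin k) (Fin k) ℝ) (hS : S.PosDef) :
    let u : Fin k → ℝ := S⁻¹.mulVec (fun _ => 1)
    let B : Matrix (Fin k) (Fin k) ℝ :=
      S⁻¹ - ((fun _ => (1 : ℝ)) ⬝ᵥ S⁻¹.mulVec (fun _ => 1))⁻¹ • vecMulVec u u
    B.PosSemidef ∧ ∀ x : Fin k → ℝ, B.mulVec x = 0 ↔ ∃ c : ℝ, x = c • (fun _ => (1 : ℝ)) :=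
  ⟨hS.inv.posSemidef.deflation _, hS.inv.deflation_mulVec_eq_zero_iff _⟩

/-- `B = Σ⁻¹ - Σ⁻¹1 1'Σ⁻¹/(1'Σ⁻¹1)` is PSD and its kernel is `span{1}`. -/
theorem centered_inverse_psd_and_kernel
    (k : ℕ) (hk : 0 < k) (S : Matrix (Fin k) (Fin k) ℝ) (hS : S.PosDef) :
    let u : Fin k → ℝ := S⁻¹.mulVec (fun _ => 1)
    let B : Matrix (Fin k) (Fin k) ℝ :=
      S⁻¹ - ((fun _ => (1 : ℝ)) ⬝ᵥ S⁻¹.mulVec (fun _ => 1))⁻¹ • vecMulVec u u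
    B.PosSemidef ∧ ∀ x : Fin k → ℝ, B.mulVec x = 0 ↔ ∃ c : ℝ, x = c • (fun _ => (1 : ℝ)) :=
  centered_inverse_psd_and_kernel_general k S hS
end

section
/- If Σ = I_k + η 1_k' + 1_k η' is positive definite for some η ∈ ℝᵏ (a type-H matrix), then Σ⁻¹ - Σ⁻¹ 1_k 1_k' Σ⁻¹/(1_k' Σ⁻¹ 1_k) = I_k - (1/k) 1_k 1_k'. -/
/-!
Multiply both sides by `Σ`. For `Σ = I + η1' + 1η'` one computes `Σ B_k = I - 1w'` with
`w = ((1 + 1'η)/k) 1 - η`. This `w` satisfies `1'w = 1` and `Σw ∝ 1`, so `w = Σ⁻¹1 / (1'Σ⁻¹1)`,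
and then `Σ B̃ = I - 1 (Σ⁻¹1)'/(1'Σ⁻¹1) = I - 1w'` as well; `Σ` is invertible, hence `B̃ = B_k`.
-/

open Matrix

section GLSResidual

variable {n K : Type*} [Fintype n] [DecidableEq n] [Field K]
  {S : Matrix n n K} {u v : n → K} {α : K}

theorem inv_dotProduct_smul_inv_mulVec_eq (hS : IsUnit S.det) (hSv : S *ᵥ v = α • u)
    (huv : u ⬝ᵥ v = 1) : (u ⬝ᵥ S⁻¹ *ᵥ u)⁻¹ • S⁻¹ *ᵥ u = v := by
  have hv : v = α • S⁻¹ *ᵥ u := by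
    rw [← mulVec_smul, ← hSv, mulVec_mulVec, nonsing_inv_mul _ hS, one_mulVec]
  have hα : α ≠ 0 := by
    rintro rfl
    simp [hv] at huv
  rw [← inv_smul_smul₀ hα (S⁻¹ *ᵥ u), ← hv, dotProduct_smul, huv, smul_eq_mul, mul_one, inv_inv,
    smul_smul, mul_inv_cancel₀ hα, one_smul]

theorem mul_inv_sub_smul_vecMulVec_inv_mulVec (hS : IsUnit S.det) (hSv : S *ᵥ v = α • u)
    (huv : u ⬝ᵥ v = 1) :
    S * (S⁻¹ - (u ⬝ᵥ S⁻¹ *ᵥ u)⁻¹ • vecMulVec (S⁻¹ *ᵥ u) (S⁻¹ *ᵥ u)) = 1 - vecMulVec u v := by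
  rw [mul_sub, mul_nonsing_inv _ hS, Matrix.mul_smul, mul_vecMulVec, mulVec_mulVec,
    mul_nonsing_inv _ hS, one_mulVec, ← vecMulVec_smul, inv_dotProduct_smul_inv_mulVec_eq hS hSv huv]

end GLSResidual

section TypeH

variable {n K : Type*} [Fintype n] [Field K] (η : n → K)

def typeH [DecidableEq n] : Matrix n n K := 1 + vecMulVec η 1 + vecMulVec 1 η

/- The vector `w` with `Σ B_k = I - 1w'`; it turns out to be `Σ⁻¹1 / (1'Σ⁻¹1)`. -/
def typeHWeights : n → K := ((Fintype.card n : K)⁻¹ * (1 + 1 ⬝ᵥ η)) • 1 - η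

theorem typeH_mulVec [DecidableEq n] (x : n → K) :
    typeH η *ᵥ x = x + (1 ⬝ᵥ x) • η + (η ⬝ᵥ x) • 1 := by
  simp only [typeH, add_mulVec, one_mulVec, vecMulVec_mulVec]
  ext i
  simp [mul_comm]

variable {η}

theorem one_dotProduct_typeHWeights (hn : (Fintype.card n : K) ≠ 0) :
    1 ⬝ᵥ typeHWeights η = 1 := by
  simp only [typeHWeights, dotProduct_sub, dotProduct_smul, one_dotProduct_one, smul_eq_mul]
  field_simp
  ring

theorem typeH_mulVec_typeHWeights [DecidableEq n] (hn : (Fintype.card n : K) ≠ 0) :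
    typeH η *ᵥ typeHWeights η
      = ((Fintype.card n : K)⁻¹ * (1 + 1 ⬝ᵥ η) + η ⬝ᵥ typeHWeights η) • 1 := by
  rw [typeH_mulVec, one_dotProduct_typeHWeights hn, typeHWeights]
  module

theorem typeH_mul_centering [DecidableEq n] (hn : (Fintype.card n : K) ≠ 0) :
    typeH η * (1 - (Fintype.card n : K)⁻¹ • vecMulVec 1 1) = 1 - vecMulVec 1 (typeHWeights η) := by
  rw [mul_sub, mul_one, Matrix.mul_smul, mul_vecMulVec, typeH_mulVec]
  ext i j
  simp only [typeH, typeHWeights, one_dotProduct_one, dotProduct_comm η, Matrix.sub_apply,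
    Matrix.add_apply, Matrix.smul_apply, vecMulVec_apply, Pi.add_apply, Pi.sub_apply,
    Pi.smul_apply, Pi.one_apply, smul_eq_mul]
  field_simp
  ring

end TypeH

/-- for a positive definite type-H matrix `Σ`, the matrix
`Σ⁻¹ - Σ⁻¹1 1'Σ⁻¹/(1'Σ⁻¹1)` is the centering projection `I - (1/k)1 1'`. -/
theorem typeH_gives_centering_projection
    (k : ℕ) (hk : 0 < k) (η : Fin k → ℝ)
    (S : Matrix (Fin k) (Fin k) ℝ)
    (hSdef : S = 1 + vecMulVec η (fun _ => 1) + vecMulVec (fun _ => 1) η)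
    (hS : S.PosDef) :
    S⁻¹ - ((fun _ => (1 : ℝ)) ⬝ᵥ S⁻¹.mulVec (fun _ => 1))⁻¹ •
        vecMulVec (S⁻¹.mulVec (fun _ => 1)) (S⁻¹.mulVec (fun _ => 1))
      = 1 - (k : ℝ)⁻¹ • vecMulVec (fun _ => 1) (fun _ => 1) := by
  change S = typeH η at hSdef
  subst hSdef
  have hdet : IsUnit (typeH η).det := (isUnit_iff_isUnit_det _).mp hS.isUnit
  have hn : (Fintype.card (Fin k) : ℝ) ≠ 0 := by simp [hk.ne']
  have hcenter := typeH_mul_centering (η := η) hn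
  rw [Fintype.card_fin] at hcenter
  refine hS.isUnit.mul_left_cancel ?_
  exact (mul_inv_sub_smul_vecMulVec_inv_mulVec hdet (typeH_mulVec_typeHWeights hn)
    (one_dotProduct_typeHWeights hn)).trans hcenter.symm
end

section
/- Let λ₁, λ₂ be real numbers with 1 + λ₁ + λ₂ ≠ 0. Define the 3×3 matrices Γ = [[1,−1,−1],[0,1,0],[0,0,1]] and Λ = (1+λ₁+λ₂)⁻¹ [[1+λ₁+λ₂, 0, 0],[λ₁, 1+λ₂, −λ₁],[λ₂, −λ₂, 1+λ₁]]. Let ℓ = (1,λ₁,λ₂)ᵀ, ℓ₀ = (−1, 1+λ₂, −λ₂)ᵀ, ℓ₁ = (−1, −λ₁, 1+λ₁)ᵀ, and L₁ = (ℓ | ℓ₀ | ℓ₁). Then L₁ = (1+λ₁+λ₂) Γ Λ, and for every (x,y) ∈ ℝ², the vector Λ(1,x,y)ᵀ is a positive scalar multiple of a vector of the form (1, x', y')ᵀ; consequently, for any 3×3 symmetric positive semidefinite matrix V, min_{x,y} (1,x,y) L₁' V L₁ (1,x,y)ᵀ = (1+λ₁+λ₂)² min_{x,y} (1,x,y) Γ'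 V Γ (1,x,y)ᵀ. -/
open Matrix Pointwise

/-- the factorization `L₁ = (1+λ₁+λ₂) Γ Λ` and invariance of the minimum of
the quadratic form under the change of variables `Λ`. -/
theorem total_effect_quadratic_form_reduction
    (lam₁ lam₂ : ℝ) (hlam : 1 + lam₁ + lam₂ ≠ 0)
    (Γ Λ L₁ : Matrix (Fin 3) (Fin 3) ℝ)
    (hΓ : Γ = !![1, -1, -1; 0, 1, 0; 0, 0, 1])
    (hΛ : Λ = (1 + lam₁ + lam₂)⁻¹ •
      !![1 + lam₁ + lam₂, 0, 0; lam₁, 1 + lam₂, -lam₁; lam₂, -lam₂, 1 + lam₁])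
    (hL₁ : L₁ = Matrix.of fun i j =>
      ![![1, lam₁, lam₂], ![-1, 1 + lam₂, -lam₂], ![-1, -lam₁, 1 + lam₁]] j i) :
    L₁ = (1 + lam₁ + lam₂) • (Γ * Λ) ∧
    (∀ x y : ℝ, ∃ c : ℝ, 0 < c ∧ ∃ x' y' : ℝ,
        Λ.mulVec ![1, x, y] = c • ![1, x', y']) ∧
    ∀ V : Matrix (Fin 3) (Fin 3) ℝ, V.PosSemidef →
      sInf (Set.range fun p : ℝ × ℝ =>
          ![1, p.1, p.2] ⬝ᵥ (L₁ᵀ * V * L₁).mulVec ![1, p.1, p.2])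
        = (1 + lam₁ + lam₂) ^ 2 *
          sInf (Set.range fun p : ℝ × ℝ =>
            ![1, p.1, p.2] ⬝ᵥ (Γᵀ * V * Γ).mulVec ![1, p.1, p.2]) := by
  have hfact : L₁ = (1 + lam₁ + lam₂) • (Γ * Λ) := by
    subst hΓ hΛ hL₁
    ext i j
    fin_cases i <;> fin_cases j <;>
      simp [Matrix.mul_apply, Fin.sum_univ_three, Matrix.vecHead, Matrix.vecTail] <;>
      field_simp <;> first | ring1 | tauto | (left; ring1)
  have hΛv : ∀ x y : ℝ, Λ.mulVec ![1, x, y] =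
      ![1, (lam₁ + (1+lam₂)*x - lam₁*y)/(1 + lam₁ + lam₂),
           (lam₂ - lam₂*x + (1+lam₁)*y)/(1 + lam₁ + lam₂)] := by
    intro x y
    subst hΛ
    ext i
    fin_cases i <;>
      simp [Matrix.mulVec, dotProduct, Fin.sum_univ_three,
        Matrix.vecHead, Matrix.vecTail] <;>
      field_simp <;> first | ring1 | tauto | (left; ring1)
  refine ⟨hfact, ?_, ?_⟩
  · intro x y
    exact ⟨1, one_pos, (lam₁ + (1+lam₂)*x - lam₁*y)/(1 + lam₁ + lam₂),
      (lam₂ - lam₂*x + (1+lam₁)*y)/(1 + lam₁ + lam₂), by simp [hΛv]⟩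
  intro V hV
  have hform : ∀ v : Fin 3 → ℝ,
      v ⬝ᵥ (L₁ᵀ * V * L₁).mulVec v =
        (1 + lam₁ + lam₂)^2 *
          ((Λ.mulVec v) ⬝ᵥ (Γᵀ * V * Γ).mulVec (Λ.mulVec v)) := by
    intro v
    rw [hfact]
    simp only [Matrix.transpose_smul, Matrix.smul_mul, Matrix.mul_smul,
      Matrix.smul_mulVec, Matrix.mulVec_smul, dotProduct_smul,
      smul_eq_mul, Matrix.transpose_mul]
    rw [show Λᵀ * Γᵀ * V * (Γ * Λ) = Λᵀ * (Γᵀ * V * Γ * Λ) by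
        simp only [Matrix.mul_assoc],
      ← Matrix.mulVec_mulVec, Matrix.dotProduct_mulVec v,
      Matrix.vecMul_transpose, ← Matrix.mulVec_mulVec]
    ring
  have hsolve : ∀ x y : ℝ, ∃ a b : ℝ, Λ.mulVec ![1, a, b] = ![1, x, y] := by
    intro x y
    set s := 1 + lam₁ + lam₂ with hs
    refine ⟨((1+lam₁)*(s*x-lam₁) + lam₁*(s*y-lam₂))/s,
      (lam₂*(s*x-lam₁)+(1+lam₂)*(s*y-lam₂))/s, ?_⟩
    rw [hΛv]
    ext i
    fin_cases i <;>
      simp [Matrix.vecHead, Matrix.vecTail] <;> field_simp <;> ring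
  have hrange : (Set.range fun p : ℝ × ℝ =>
        ![1, p.1, p.2] ⬝ᵥ (L₁ᵀ * V * L₁).mulVec ![1, p.1, p.2])
      = (fun r => (1 + lam₁ + lam₂)^2 * r) ''
        (Set.range fun p : ℝ × ℝ =>
          ![1, p.1, p.2] ⬝ᵥ (Γᵀ * V * Γ).mulVec ![1, p.1, p.2]) := by
    ext r
    constructor
    · rintro ⟨⟨x, y⟩, rfl⟩
      refine ⟨_, ⟨((lam₁ + (1+lam₂)*x - lam₁*y)/(1 + lam₁ + lam₂),
        (lam₂ - lam₂*x + (1+lam₁)*y)/(1 + lam₁ + lam₂)), rfl⟩, ?_⟩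
      dsimp only
      rw [hform ![1, x, y], hΛv]
    · rintro ⟨_, ⟨⟨x, y⟩, rfl⟩, rfl⟩
      obtain ⟨a, b, hab⟩ := hsolve x y
      refine ⟨(a, b), ?_⟩
      dsimp only
      rw [hform ![1, a, b], hab]
  rw [hrange]
  have himg : (fun r => (1 + lam₁ + lam₂)^2 * r) ''
      (Set.range fun p : ℝ × ℝ =>
        ![1, p.1, p.2] ⬝ᵥ (Γᵀ * V * Γ).mulVec ![1, p.1, p.2])
      = (1 + lam₁ + lam₂)^2 • (Set.range fun p : ℝ × ℝ =>
        ![1, p.1, p.2] ⬝ᵥ (Γᵀ * V * Γ).mulVec ![1, p.1, p.2]) := by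
    simp only [← Set.image_smul, smul_eq_mul]
  rw [himg, Real.sInf_smul_of_nonneg (sq_nonneg _), smul_eq_mul]
end

section
/- Let s : ℤ/kℤ → {1,…,t} be a circular sequence, T_s its k×t indicator matrix, H the k×k circulant shift matrix with H_{ij} = 𝟙[i = j+1 mod k], L_s = H T_s, and B_k = I_k − (1/k)1_k1_k'. Then tr(T_s' B_k L_s) = f_s − m_s, where f_s = Σ_{j} 𝟙[s(j) = s(j−1)] and m_s = k⁻¹Σᵢ k_i² with k_i = |{j : s(j) = i}|. -/
/-!
Since `B = 1 - k⁻¹ • 1 1ᵀ`, the trace splits as `tr (Tᵀ (H T)) - k⁻¹ ⟪1ᵀ T, 1ᵀ (H T)⟫`.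
Left multiplication by `H` reindexes the rows by `j ↦ j - 1`, so `H T` is the indicator
matrix of `j ↦ s (j - 1)` and `tr (Tᵀ (H T))` counts the `j` with `s j = s (j - 1)`;
and a permutation of the rows does not change the column sums, so both `1ᵀ T` and
`1ᵀ (H T)` are the vector of treatment counts `kᵢ`.
-/

open Matrix Finset

section
variable {ι κ R : Type*} [Fintype ι]

theorem trace_transpose_mul_vecMulVec_mul [Fintype κ] [CommSemiring R] (A B : Matrix ι κ R)
    (u v : ι → R) : (Aᵀ * vecMulVec u v * B).trace = (u ᵥ* A) ⬝ᵥ (v ᵥ* B) := by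
  simp only [trace, diag_apply, mul_apply, transpose_apply, vecMulVec_apply, dotProduct, vecMul,
    sum_mul, mul_sum]
  exact sum_congr rfl fun _ _ => sum_congr rfl fun _ _ => sum_congr rfl fun _ _ => by ring

theorem trace_transpose_mul_centering_mul [Fintype κ] [DecidableEq ι] [CommRing R]
    (A B : Matrix ι κ R) (c : R) (u v : ι → R) :
    (Aᵀ * (1 - c • vecMulVec u v) * B).trace =
      (Aᵀ * B).trace - c * (u ᵥ* A) ⬝ᵥ (v ᵥ* B) := by
  rw [Matrix.mul_sub, Matrix.sub_mul, Matrix.mul_one, trace_sub, Matrix.mul_smul, Matrix.smul_mul,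
    trace_smul, trace_transpose_mul_vecMulVec_mul, smul_eq_mul]

theorem shift_mul_eq_submatrix {G : Type*} [AddGroup G] [Fintype G] [DecidableEq G]
    [NonAssocSemiring R] (a : G) (M : Matrix G κ R) :
    (of fun i j : G => if i = j + a then (1 : R) else 0) * M =
      M.submatrix (Equiv.subRight a) id := by
  have hshift : (of fun i j : G => if i = j + a then (1 : R) else 0) =
      (1 : Matrix G G R).submatrix id (Equiv.addRight a) := by
    ext i j
    simp [one_apply]
  rw [hshift, one_submatrix_mul]
  ext i j
  simp [sub_eq_add_neg]

theorem one_vecMul_submatrix_equiv [NonAssocSemiring R] (M : Matrix ι κ R) (e : ι ≃ ι) :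
    (1 : ι → R) ᵥ* M.submatrix e id = 1 ᵥ* M := by
  rw [submatrix_vecMul_equiv]; rfl

variable [DecidableEq κ]

def indicatorMatrix (R : Type*) [Zero R] [One R] (s : ι → κ) : Matrix ι κ R :=
  of fun j i => if s j = i then 1 else 0

omit [Fintype ι] in
theorem indicatorMatrix_submatrix {ι' : Type*} [Zero R] [One R] (s : ι → κ) (g : ι' → ι) :
    (indicatorMatrix R s).submatrix g id = indicatorMatrix R (s ∘ g) := rfl

theorem one_vecMul_indicatorMatrix [NonAssocSemiring R] (s : ι → κ) (i : κ) :
    ((1 : ι → R) ᵥ* indicatorMatrix R s) i = #{j | s j = i} := by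
  simp [vecMul, dotProduct, indicatorMatrix, sum_boole]

theorem trace_transpose_indicatorMatrix_mul [Fintype κ] [NonAssocSemiring R] (s s' : ι → κ) :
    ((indicatorMatrix R s)ᵀ * indicatorMatrix R s').trace =
      ∑ j, if s j = s' j then 1 else 0 := by
  simp only [trace, diag_apply, mul_apply, transpose_apply, indicatorMatrix, of_apply, mul_ite,
    mul_one, mul_zero]
  rw [sum_comm]
  simp [eq_comm]

end

/-- `tr(T_s' B_k L_s) = f_s − m_s` for the circular shift `H` and
`L_s = H T_s`. -/
theorem trace_centered_neighbor_design_matrix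
    (k t : ℕ) [NeZero k] (s : ZMod k → Fin t) :
    let T : Matrix (ZMod k) (Fin t) ℝ := Matrix.of fun j i => if s j = i then 1 else 0
    let H : Matrix (ZMod k) (ZMod k) ℝ := Matrix.of fun i j => if i = j + 1 then 1 else 0
    let B : Matrix (ZMod k) (ZMod k) ℝ :=
      1 - (k : ℝ)⁻¹ • vecMulVec (fun _ => 1) (fun _ => 1)
    (Tᵀ * B * (H * T)).trace
      = (∑ j : ZMod k, if s j = s (j - 1) then (1 : ℝ) else 0)
        - (k : ℝ)⁻¹ *
            ∑ i : Fin t, ((Finset.univ.filter fun j : ZMod k => s j = i).card : ℝ) ^ 2 := by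
  intro T H B
  have hT : T = indicatorMatrix ℝ s := rfl
  have hB : B = 1 - (k : ℝ)⁻¹ • vecMulVec 1 1 := rfl
  rw [hB, shift_mul_eq_submatrix, trace_transpose_mul_centering_mul, hT,
    one_vecMul_submatrix_equiv, indicatorMatrix_submatrix, trace_transpose_indicatorMatrix_mul]
  simp only [Function.comp_apply, Equiv.subRight_apply, dotProduct, one_vecMul_indicatorMatrix, sq]
end
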